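/- arXiv:1908.07870 — 8 statements merged into one kernel-verified Lean document; each statement's English description precedes it below -/
import Mathlib

section
/- For every achievement row y_i, the deprivation count satisfies D_i ≤ d̄ := d + (Σ − d)/(d − 1), and D_i = d̄ if and only if y_{ij} ≤ z_j for every dimension j (i.e. r_{ij}^0 = 1 for all j). -/
/-
With `α = 0` the gap `r_{ij}^0` is the indicator of `y_{ij} ≤ z_j`, so `D_i` is the sum of these
indicators plus `1/(d-1)` times their `M`-weighted off-diagonal sums. Since `M_{jj} = 1`,
`d̄ = d + (1/(d-1)) Σ_{j ≠ j'} M_{jj'}` is the same expression with every indicator equal to `1`.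
Both parts are monotone in the indicators, so `D_i ≤ d̄`, and equality forces every indicator to be `1`.
-/

open Finset

/-- Deprivation gap `r_{ij}^α` for an achievement row `y` (convention `0 ^ (0:ℝ) = 1`). -/
noncomputable def gap {d : ℕ} (z y : Fin d → ℝ) (α : ℝ) (j : Fin d) : ℝ :=
  if y j ≤ z j then ((z j - y j) / z j) ^ α else 0

/-- Network-adjusted deprivation `D_{ij}^α`. -/
noncomputable def Dnet {d : ℕ} (M : Fin d → Fin d → ℝ) (z y : Fin d → ℝ) (α : ℝ)
    (j : Fin d) : ℝ :=
  gap z y α j + (1 / ((d : ℝ) - 1)) * ∑ j' ∈ Finset.univ.erase j, M j j' * gap z y α j'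

/-- Sum `Σ_j` of the `j`-th column of `M`. -/
noncomputable def colSum {d : ℕ} (M : Fin d → Fin d → ℝ) (j : Fin d) : ℝ := ∑ j', M j' j

section

variable {d : ℕ}

theorem gap_zero (z y : Fin d → ℝ) (j : Fin d) :
    gap z y 0 j = if y j ≤ z j then 1 else 0 := by
  simp only [gap, Real.rpow_zero]

theorem gap_zero_le_one (z y : Fin d → ℝ) (j : Fin d) : gap z y 0 j ≤ 1 := by
  rw [gap_zero]
  split_ifs <;> norm_num

theorem gap_zero_eq_one_iff (z y : Fin d → ℝ) (j : Fin d) : gap z y 0 j = 1 ↔ y j ≤ z j := by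
  rw [gap_zero]
  split_ifs with h <;> simp [h]

theorem sum_Dnet (M : Fin d → Fin d → ℝ) (z y : Fin d → ℝ) (α : ℝ) :
    ∑ j, Dnet M z y α j = ∑ j, gap z y α j +
      1 / ((d : ℝ) - 1) * ∑ j, ∑ j' ∈ univ.erase j, M j j' * gap z y α j' := by
  simp only [Dnet, sum_add_distrib, mul_sum]

theorem sum_sum_eq_card_add_sum_offDiag (M : Fin d → Fin d → ℝ) (hMdiag : ∀ j, M j j = 1) :
    ∑ j, ∑ j', M j j' = d + ∑ j, ∑ j' ∈ univ.erase j, M j j' := by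
  have hsplit j : ∑ j', M j j' = 1 + ∑ j' ∈ univ.erase j, M j j' := by
    rw [← hMdiag j, add_sum_erase univ (M j) (mem_univ j)]
  rw [sum_congr rfl fun j _ => hsplit j, sum_add_distrib]
  simp

theorem sum_offDiag_mul_le (M : Fin d → Fin d → ℝ) (hM0 : ∀ j j', 0 ≤ M j j')
    (g : Fin d → ℝ) (hg : ∀ j, g j ≤ 1) :
    ∑ j, ∑ j' ∈ univ.erase j, M j j' * g j' ≤ ∑ j, ∑ j' ∈ univ.erase j, M j j' :=
  sum_le_sum fun j _ => sum_le_sum fun j' _ => mul_le_of_le_one_right (hM0 j j') (hg j')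

end

theorem Di_le_dbar_iff_general (d : ℕ) (hd : 2 ≤ d) (z : Fin d → ℝ)
    (M : Fin d → Fin d → ℝ) (hM0 : ∀ j j', 0 ≤ M j j')
    (hMdiag : ∀ j, M j j = 1) (y : Fin d → ℝ) :
    (∑ j, Dnet M z y 0 j) ≤ (d : ℝ) + ((∑ j, ∑ j', M j j') - (d : ℝ)) / ((d : ℝ) - 1) ∧
    ((∑ j, Dnet M z y 0 j) = (d : ℝ) + ((∑ j, ∑ j', M j j') - (d : ℝ)) / ((d : ℝ) - 1) ↔
      ∀ j, y j ≤ z j) := by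
  have hc : 0 ≤ 1 / ((d : ℝ) - 1) := by
    have : (2 : ℝ) ≤ d := by exact_mod_cast hd
    exact one_div_nonneg.mpr (by linarith)
  have hdbar : (d : ℝ) + ((∑ j, ∑ j', M j j') - d) / ((d : ℝ) - 1) =
      ∑ _j : Fin d, (1 : ℝ) + 1 / ((d : ℝ) - 1) * ∑ j, ∑ j' ∈ univ.erase j, M j j' := by
    rw [sum_sum_eq_card_add_sum_offDiag M hMdiag]
    simp only [sum_const, card_univ, Fintype.card_fin, nsmul_eq_mul, mul_one]
    ring
  have hgap : ∑ j, gap z y 0 j ≤ ∑ _j : Fin d, (1 : ℝ) :=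
    sum_le_sum fun j _ => gap_zero_le_one z y j
  have hnet := mul_le_mul_of_nonneg_left
    (sum_offDiag_mul_le M hM0 (gap z y 0) (gap_zero_le_one z y)) hc
  rw [sum_Dnet, hdbar, add_eq_add_iff_eq_and_eq hgap hnet,
    sum_eq_sum_iff_of_le fun j _ => gap_zero_le_one z y j]
  refine ⟨add_le_add hgap hnet, fun ⟨hone, _⟩ j => (gap_zero_eq_one_iff z y j).mp
    (hone j (mem_univ j)), fun hle => ?_⟩
  have hone : ∀ j, gap z y 0 j = 1 := fun j => (gap_zero_eq_one_iff z y j).mpr (hle j)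
  simp only [hone, mul_one, implies_true, and_self]

/-- `D_i ≤ d̄ = d + (Σ − d)/(d − 1)`, with equality iff `y_j ≤ z_j` for all `j`. -/
theorem Di_le_dbar_iff (d : ℕ) (hd : 2 ≤ d) (z : Fin d → ℝ) (hz : ∀ j, 0 < z j)
    (M : Fin d → Fin d → ℝ) (hM0 : ∀ j j', 0 ≤ M j j') (hM1 : ∀ j j', M j j' ≤ 1)
    (hMdiag : ∀ j, M j j = 1) (y : Fin d → ℝ) (hy : ∀ j, 0 ≤ y j) :
    (∑ j, Dnet M z y 0 j) ≤ (d : ℝ) + ((∑ j, ∑ j', M j j') - (d : ℝ)) / ((d : ℝ) - 1) ∧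
    ((∑ j, Dnet M z y 0 j) = (d : ℝ) + ((∑ j, ∑ j', M j j') - (d : ℝ)) / ((d : ℝ) - 1) ↔
      ∀ j, y j ≤ z j) :=
  Di_le_dbar_iff_general d hd z M hM0 hMdiag y
end

section
/- For every achievement row y_i, either D_i = 0 or D_i ≥ d̲ := 1 + (min_{1≤j≤d} Σ_j − 1)/(d − 1). Moreover, if y_i is deprived in exactly one dimension j (i.e. r_{ij}^0 = 1 and r_{ij'}^0 = 0 for all j' ≠ j), then D_i = 1 + (Σ_j − 1)/(d − 1). -/
open Finset

/-!
Because `M` has unit diagonal, exchanging the order of summation gives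
`D_i = ∑_j r_{ij}^α (1 + (Σ_j - 1)/(d - 1))`: every deprived dimension contributes the weight of
its own column. Each column contains the diagonal entry `1`, so all weights are at least `1`,
and a single deprived dimension `j` already contributes `1 + (Σ_j - 1)/(d - 1) ≥ d̲`.
-/

lemma gap_zero_eq_zero_or_one {d : ℕ} (z y : Fin d → ℝ) (j : Fin d) :
    gap z y 0 j = 0 ∨ gap z y 0 j = 1 := by
  unfold gap
  split_ifs <;> simp

lemma one_le_colSum {d : ℕ} {M : Fin d → Fin d → ℝ} (hM0 : ∀ j j', 0 ≤ M j j')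
    (hMdiag : ∀ j, M j j = 1) (j : Fin d) : 1 ≤ colSum M j :=
  hMdiag j ▸ single_le_sum (fun j' _ => hM0 j' j) (mem_univ j)

lemma one_le_one_add_colSum_sub_one_div {d : ℕ} {M : Fin d → Fin d → ℝ}
    (hM0 : ∀ j j', 0 ≤ M j j') (hMdiag : ∀ j, M j j = 1) (j : Fin d) :
    1 ≤ 1 + (colSum M j - 1) / ((d : ℝ) - 1) := by
  have hd : (1 : ℝ) ≤ d := by exact_mod_cast j.pos
  have := one_le_colSum hM0 hMdiag j
  have : 0 ≤ (colSum M j - 1) / ((d : ℝ) - 1) := by apply div_nonneg <;> linarith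
  linarith

lemma sum_sum_erase_mul_eq {d : ℕ} {M : Fin d → Fin d → ℝ} (hMdiag : ∀ j, M j j = 1)
    (g : Fin d → ℝ) :
    ∑ j, ∑ j' ∈ univ.erase j, M j j' * g j' = ∑ j, g j * (colSum M j - 1) := by
  simp_rw [sum_erase_eq_sub (mem_univ _), hMdiag, one_mul, sum_sub_distrib, mul_sub, mul_one,
    colSum, mul_sum]
  rw [sum_sub_distrib, sum_comm]
  simp_rw [mul_comm]

lemma sum_Dnet_eq {d : ℕ} {M : Fin d → Fin d → ℝ} (hMdiag : ∀ j, M j j = 1)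
    (z y : Fin d → ℝ) (α : ℝ) :
    ∑ j, Dnet M z y α j = ∑ j, gap z y α j * (1 + (colSum M j - 1) / ((d : ℝ) - 1)) := by
  simp only [Dnet]
  rw [sum_add_distrib, ← mul_sum, sum_sum_erase_mul_eq hMdiag, mul_sum, ← sum_add_distrib]
  exact sum_congr rfl fun j _ => by ring

theorem Di_lower_bound_general (d : ℕ) (z : Fin d → ℝ)
    (M : Fin d → Fin d → ℝ) (hM0 : ∀ j j', 0 ≤ M j j')
    (hMdiag : ∀ j, M j j = 1) (y : Fin d → ℝ) :
    ((∑ j, Dnet M z y 0 j) = 0 ∨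
      1 + (sInf (Set.range fun j => colSum M j) - 1) / ((d : ℝ) - 1) ≤
        ∑ j, Dnet M z y 0 j) ∧
    (∀ j : Fin d, gap z y 0 j = 1 → (∀ j', j' ≠ j → gap z y 0 j' = 0) →
      (∑ j'', Dnet M z y 0 j'') = 1 + (colSum M j - 1) / ((d : ℝ) - 1)) := by
  simp only [sum_Dnet_eq hMdiag]
  refine ⟨?_, fun j hj hother => ?_⟩
  · by_cases hall : ∀ j, gap z y 0 j = 0
    · left
      simp [hall]
    · right
      obtain ⟨j₀, hj₀⟩ := not_forall.mp hall
      have hd : (0 : ℝ) ≤ d - 1 := by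
        have : (1 : ℝ) ≤ d := by exact_mod_cast j₀.pos
        linarith
      have hterm_nonneg (j : Fin d) :
          0 ≤ gap z y 0 j * (1 + (colSum M j - 1) / ((d : ℝ) - 1)) := by
        have := one_le_one_add_colSum_sub_one_div hM0 hMdiag j
        rcases gap_zero_eq_zero_or_one z y j with h | h <;> rw [h] <;> linarith
      calc 1 + (sInf (Set.range fun j => colSum M j) - 1) / ((d : ℝ) - 1)
          ≤ 1 + (colSum M j₀ - 1) / ((d : ℝ) - 1) := by
            gcongr
            exact csInf_le (Set.finite_range _).bddBelow ⟨j₀, rfl⟩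
        _ = gap z y 0 j₀ * (1 + (colSum M j₀ - 1) / ((d : ℝ) - 1)) := by
            rw [(gap_zero_eq_zero_or_one z y j₀).resolve_left hj₀, one_mul]
        _ ≤ _ := single_le_sum (fun j _ => hterm_nonneg j) (mem_univ j₀)
  · rw [sum_eq_single j (fun j' _ hj' => by rw [hother j' hj', zero_mul]) (by simp), hj, one_mul]

/-- either `D_i = 0` or `D_i ≥ d̲ = 1 + (min_j Σ_j − 1)/(d−1)`; and if `y`
is deprived in exactly one dimension `j` then `D_i = 1 + (Σ_j − 1)/(d−1)`. -/
theorem Di_lower_bound (d : ℕ) (hd : 2 ≤ d) (z : Fin d → ℝ) (hz : ∀ j, 0 < z j)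
    (M : Fin d → Fin d → ℝ) (hM0 : ∀ j j', 0 ≤ M j j') (hM1 : ∀ j j', M j j' ≤ 1)
    (hMdiag : ∀ j, M j j = 1) (y : Fin d → ℝ) (hy : ∀ j, 0 ≤ y j) :
    ((∑ j, Dnet M z y 0 j) = 0 ∨
      1 + (sInf (Set.range fun j => colSum M j) - 1) / ((d : ℝ) - 1) ≤
        ∑ j, Dnet M z y 0 j) ∧
    (∀ j : Fin d, gap z y 0 j = 1 → (∀ j', j' ≠ j → gap z y 0 j' = 0) →
      (∑ j'', Dnet M z y 0 j'') = 1 + (colSum M j - 1) / ((d : ℝ) - 1)) :=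
  Di_lower_bound_general d z M hM0 hMdiag y
end

section
/- For every achievement row y_i one has the linear representation D_i = Σ_{j=1}^d δ_j · r_{ij}^0, where δ_j := 1 + (Σ_j − 1)/(d − 1). Consequently, if two achievement rows y_i and x_i satisfy r_{ij'}^0(x_i) = r_{ij'}^0(y_i) for all j' ≠ j, r_{ij}^0(y_i) = 0 and r_{ij}^0(x_i) = 1, then D_i(x_i) − D_i(y_i) = δ_j exactly. -/
open Finset

/-!
Exchanging the order of summation in `Σ_j Σ_{j' ≠ j} M_{jj'} r_{ij'}` makes the coefficient of
`r_{ij'}` the off-diagonal part of the `j'`-th column of `M`, i.e. `Σ_{j'} - M_{j'j'} = Σ_{j'} - 1`.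
Since the result is linear in the gaps, switching one gap from `0` to `1` changes `D_i` by
exactly its coefficient `δ_j`.
-/

theorem sum_sum_erase_mul_of_diag_eq_one {ι R : Type*} [Fintype ι] [DecidableEq ι]
    [CommRing R] {M : ι → ι → R} (hMdiag : ∀ j, M j j = 1) (r : ι → R) :
    ∑ j, ∑ j' ∈ univ.erase j, M j j' * r j' = ∑ j', ((∑ j, M j j') - 1) * r j' := by
  simp only [sum_erase_eq_sub (mem_univ _), hMdiag, one_mul, sum_sub_distrib]
  rw [sum_comm]
  simp only [sub_mul, sum_sub_distrib, one_mul, sum_mul]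

theorem sum_mul_sub_sum_mul_of_eq_of_ne {ι R : Type*} [Fintype ι] [CommRing R] {f g : ι → R}
    (c : ι → R) {j : ι} (hfg : ∀ j', j' ≠ j → f j' = g j') :
    ∑ j', c j' * f j' - ∑ j', c j' * g j' = c j * (f j - g j) := by
  rw [← sum_sub_distrib, sum_eq_single_of_mem j (mem_univ j), mul_sub]
  intro j' _ hj'
  rw [hfg j' hj', sub_self]

theorem sum_Dnet_eq_sum_mul_gap {d : ℕ} {M : Fin d → Fin d → ℝ} (hMdiag : ∀ j, M j j = 1)
    (z y : Fin d → ℝ) (α : ℝ) :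
    ∑ j, Dnet M z y α j = ∑ j, (1 + (colSum M j - 1) / ((d : ℝ) - 1)) * gap z y α j := by
  simp only [Dnet, sum_add_distrib, ← mul_sum,
    sum_sum_erase_mul_of_diag_eq_one hMdiag]
  rw [mul_sum, ← sum_add_distrib]
  refine sum_congr rfl fun j _ => ?_
  rw [colSum]
  ring

theorem Di_linear_representation_general (d : ℕ) (z : Fin d → ℝ)
    (M : Fin d → Fin d → ℝ)
    (hMdiag : ∀ j, M j j = 1) :
    (∀ y : Fin d → ℝ, (∀ j, 0 ≤ y j) →
      (∑ j, Dnet M z y 0 j) =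
        ∑ j, (1 + (colSum M j - 1) / ((d : ℝ) - 1)) * gap z y 0 j) ∧
    (∀ x y : Fin d → ℝ, (∀ j, 0 ≤ x j) → (∀ j, 0 ≤ y j) → ∀ j : Fin d,
      (∀ j', j' ≠ j → gap z x 0 j' = gap z y 0 j') →
      gap z y 0 j = 0 → gap z x 0 j = 1 →
      (∑ j'', Dnet M z x 0 j'') - (∑ j'', Dnet M z y 0 j'') =
        1 + (colSum M j - 1) / ((d : ℝ) - 1)) := by
  refine ⟨fun y _ => sum_Dnet_eq_sum_mul_gap hMdiag z y 0, fun x y _ _ j hxy hy0 hx1 => ?_⟩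
  rw [sum_Dnet_eq_sum_mul_gap hMdiag, sum_Dnet_eq_sum_mul_gap hMdiag,
    sum_mul_sub_sum_mul_of_eq_of_ne _ hxy, hx1, hy0, sub_zero, mul_one]

/-- linear representation `D_i = Σ_j δ_j r_{ij}^0` with
`δ_j = 1 + (Σ_j − 1)/(d−1)`, and the exact jump `δ_j` when one deprivation is switched on. -/
theorem Di_linear_representation (d : ℕ) (hd : 2 ≤ d) (z : Fin d → ℝ) (hz : ∀ j, 0 < z j)
    (M : Fin d → Fin d → ℝ) (hM0 : ∀ j j', 0 ≤ M j j') (hM1 : ∀ j j', M j j' ≤ 1)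
    (hMdiag : ∀ j, M j j = 1) :
    (∀ y : Fin d → ℝ, (∀ j, 0 ≤ y j) →
      (∑ j, Dnet M z y 0 j) =
        ∑ j, (1 + (colSum M j - 1) / ((d : ℝ) - 1)) * gap z y 0 j) ∧
    (∀ x y : Fin d → ℝ, (∀ j, 0 ≤ x j) → (∀ j, 0 ≤ y j) → ∀ j : Fin d,
      (∀ j', j' ≠ j → gap z x 0 j' = gap z y 0 j') →
      gap z y 0 j = 0 → gap z x 0 j = 1 →
      (∑ j'', Dnet M z x 0 j'') - (∑ j'', Dnet M z y 0 j'') =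
        1 + (colSum M j - 1) / ((d : ℝ) - 1)) :=
  Di_linear_representation_general d z M hMdiag
end

section
/- Let α > 0 and let x_i, y_i be achievement rows that agree in every coordinate except one coordinate j', where x_{ij'} > y_{ij'}. Then for every dimension j, D_{ij}^α(x_i) ≤ D_{ij}^α(y_i); and if moreover j' = j and y_{ij} < z_j, then D_{ij}^α(x_i) < D_{ij}^α(y_i). In other words, better achievements never increase, and strictly better achievement in a deprived dimension strictly decreases, network-adjusted deprivation. -/
open Finset

/-! The gap is antitone in the achievement, strictly so below the cutoff when `α > 0`; the
spillover term of `Dnet` is a nonnegative combination of gaps, so it inherits the monotonicity. -/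

section Gap

variable {d : ℕ} {z x y : Fin d → ℝ} {α : ℝ} {j : Fin d}

theorem gap_le_gap_of_le (hz : 0 < z j) (hα : 0 ≤ α) (h : y j ≤ x j) :
    gap z x α j ≤ gap z y α j := by
  unfold gap
  split_ifs with hxz hyz hyz
  · exact Real.rpow_le_rpow (div_nonneg (sub_nonneg.2 hxz) hz.le)
      (div_le_div_of_nonneg_right (by linarith) hz.le) hα
  · exact absurd (h.trans hxz) hyz
  · exact Real.rpow_nonneg (div_nonneg (sub_nonneg.2 hyz) hz.le) α
  · exact le_rfl

theorem gap_lt_gap_of_lt (hz : 0 < z j) (hα : 0 < α) (h : y j < x j) (hdep : y j < z j) :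
    gap z x α j < gap z y α j := by
  unfold gap
  rw [if_pos hdep.le]
  split_ifs with hxz
  · exact Real.rpow_lt_rpow (div_nonneg (sub_nonneg.2 hxz) hz.le)
      (div_lt_div_of_pos_right (by linarith) hz) hα
  · exact Real.rpow_pos_of_pos (div_pos (sub_pos.2 hdep) hz) α

end Gap

section Dnet

variable {d : ℕ} {M : Fin d → Fin d → ℝ} {z x y : Fin d → ℝ} {α : ℝ}

theorem Dnet_spillover_le (hM : ∀ j j', 0 ≤ M j j') (hgap : ∀ j, gap z x α j ≤ gap z y α j)
    (j : Fin d) :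
    1 / ((d : ℝ) - 1) * ∑ j' ∈ univ.erase j, M j j' * gap z x α j' ≤
      1 / ((d : ℝ) - 1) * ∑ j' ∈ univ.erase j, M j j' * gap z y α j' := by
  have hd : (1 : ℝ) ≤ d := by exact_mod_cast j.pos
  exact mul_le_mul_of_nonneg_left
    (sum_le_sum fun j' _ => mul_le_mul_of_nonneg_left (hgap j') (hM j j'))
    (one_div_nonneg.2 (by linarith))

theorem Dnet_le_Dnet (hM : ∀ j j', 0 ≤ M j j') (hgap : ∀ j, gap z x α j ≤ gap z y α j)
    (j : Fin d) : Dnet M z x α j ≤ Dnet M z y α j :=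
  add_le_add (hgap j) (Dnet_spillover_le hM hgap j)

theorem Dnet_lt_Dnet (hM : ∀ j j', 0 ≤ M j j') (hgap : ∀ j, gap z x α j ≤ gap z y α j)
    {j : Fin d} (hlt : gap z x α j < gap z y α j) : Dnet M z x α j < Dnet M z y α j :=
  add_lt_add_of_lt_of_le hlt (Dnet_spillover_le hM hgap j)

end Dnet

theorem Dnet_monotone_general (d : ℕ) (z : Fin d → ℝ) (hz : ∀ j, 0 < z j)
    (M : Fin d → Fin d → ℝ) (hM0 : ∀ j j', 0 ≤ M j j') (α : ℝ) (hα : 0 < α)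
    (x y : Fin d → ℝ)
    (j' : Fin d) (hgt : y j' < x j') (heq : ∀ j, j ≠ j' → x j = y j) :
    (∀ j, Dnet M z x α j ≤ Dnet M z y α j) ∧
    (y j' < z j' → Dnet M z x α j' < Dnet M z y α j') := by
  have hgap : ∀ j, gap z x α j ≤ gap z y α j := by
    intro j
    refine gap_le_gap_of_le (hz j) hα.le ?_
    rcases eq_or_ne j j' with rfl | hj
    · exact hgt.le
    · exact (heq j hj).ge
  exact ⟨Dnet_le_Dnet hM0 hgap,
    fun hdep => Dnet_lt_Dnet hM0 hgap (gap_lt_gap_of_lt (hz j') hα hgt hdep)⟩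

/-- for `α > 0`, a simple increment in coordinate `j'` never increases any
`D_{ij}^α`, and strictly decreases `D_{ij'}^α` when the incremented dimension was deprived. -/
theorem Dnet_monotone (d : ℕ) (hd : 2 ≤ d) (z : Fin d → ℝ) (hz : ∀ j, 0 < z j)
    (M : Fin d → Fin d → ℝ) (hM0 : ∀ j j', 0 ≤ M j j') (hM1 : ∀ j j', M j j' ≤ 1)
    (hMdiag : ∀ j, M j j = 1) (α : ℝ) (hα : 0 < α)
    (x y : Fin d → ℝ) (hx : ∀ j, 0 ≤ x j) (hy : ∀ j, 0 ≤ y j)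
    (j' : Fin d) (hgt : y j' < x j') (heq : ∀ j, j ≠ j' → x j = y j) :
    (∀ j, Dnet M z x α j ≤ Dnet M z y α j) ∧
    (y j' < z j' → Dnet M z x α j' < Dnet M z y α j') :=
  Dnet_monotone_general d z hz M hM0 α hα x y j' hgt heq
end

section
/- Decomposability: if an achievement matrix is split by rows into two achievement matrices x (with n(x) rows) and y (with n(y) rows), then for all α ≥ 0, FGT_α(x,y; z) = (n(x)/(n(x)+n(y))) · FGT_α(x; z) + (n(y)/(n(x)+n(y))) · FGT_α(y; z), where (x,y) denotes the stacked (n(x)+n(y))×d matrix. -/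
open Finset

/-- Weighted deprivation count `D_i = Σ_j w_j D_{ij}^0`. -/
noncomputable def Dcount {d : ℕ} (M : Fin d → Fin d → ℝ) (z w y : Fin d → ℝ) : ℝ :=
  ∑ j, w j * Dnet M z y 0 j

/-- Dual-cutoff identification function `ρ_k`. -/
noncomputable def rho {d : ℕ} (M : Fin d → Fin d → ℝ) (z w : Fin d → ℝ) (k : ℝ)
    (y : Fin d → ℝ) : ℝ :=
  if k ≤ Dcount M z w y then 1 else 0

/-- Network-adjusted FGT measure with normalizing constant `dt`. -/
noncomputable def FGT {N d : ℕ} (M : Fin d → Fin d → ℝ) (z w : Fin d → ℝ) (k α dt : ℝ)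
    (y : Fin N → Fin d → ℝ) : ℝ :=
  (1 / ((N : ℝ) * dt)) * ∑ i, ∑ j, w j * Dnet M z (y i) α j * rho M z w k (y i)

theorem natCast_div_add_mul_normalized_sum (n m : ℕ) (c : ℝ) (f : Fin n → ℝ) :
    (n : ℝ) / (n + m) * (1 / (n * c) * ∑ i, f i) = 1 / ((n + m) * c) * ∑ i, f i := by
  rcases eq_or_ne n 0 with rfl | hn
  · simp
  · rcases eq_or_ne c 0 with rfl | hc
    · simp
    · field_simp

theorem FGT_decomposable_general
    (d : ℕ) (z : Fin d → ℝ) (M : Fin d → Fin d → ℝ) (w : Fin d → ℝ) (dt : ℝ) (k : ℝ) (α : ℝ)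
    (n m : ℕ) (x : Fin n → Fin d → ℝ) (y : Fin m → Fin d → ℝ) :
    FGT M z w k α dt (Fin.append x y) =
      ((n : ℝ) / ((n : ℝ) + (m : ℝ))) * FGT M z w k α dt x +
        ((m : ℝ) / ((n : ℝ) + (m : ℝ))) * FGT M z w k α dt y := by
  set score : (Fin d → ℝ) → ℝ := fun v ↦ ∑ j, w j * Dnet M z v α j * rho M z w k v
  have h_append : FGT M z w k α dt (Fin.append x y) =
      1 / ((n + m) * dt) * (∑ i, score (x i) + ∑ i, score (y i)) := by
    simp only [FGT, Fin.sum_univ_add, Fin.append_left, Fin.append_right, Nat.cast_add, score]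
  have h_x := natCast_div_add_mul_normalized_sum n m dt (fun i ↦ score (x i))
  have h_y := natCast_div_add_mul_normalized_sum m n dt (fun i ↦ score (y i))
  rw [add_comm (m : ℝ)] at h_y
  change _ = (n : ℝ) / (n + m) * (1 / (n * dt) * ∑ i, score (x i)) +
    (m : ℝ) / (n + m) * (1 / (m * dt) * ∑ i, score (y i))
  rw [h_append, h_x, h_y, mul_add]

/-- decomposability of the network-adjusted FGT measure. -/
theorem FGT_decomposable
    (d : ℕ) (hd : 2 ≤ d) (z : Fin d → ℝ) (hz : ∀ j, 0 < z j)
    (M : Fin d → Fin d → ℝ) (hM0 : ∀ j j', 0 ≤ M j j') (hM1 : ∀ j j', M j j' ≤ 1)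
    (hMdiag : ∀ j, M j j = 1)
    (w : Fin d → ℝ) (hw : ∀ j, 0 < w j) (hwsum : (∑ j, w j) = (d : ℝ))
    (dt : ℝ) (hdt : dt = (d : ℝ) + ((∑ j, w j * colSum M j) - (d : ℝ)) / ((d : ℝ) - 1))
    (k : ℝ) (hk0 : 0 < k) (hk1 : k ≤ dt) (α : ℝ) (hα : 0 ≤ α)
    (n m : ℕ) (hn : 1 ≤ n) (hm : 1 ≤ m)
    (x : Fin n → Fin d → ℝ) (hx : ∀ i j, 0 ≤ x i j)
    (y : Fin m → Fin d → ℝ) (hy : ∀ i j, 0 ≤ y i j) :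
    FGT M z w k α dt (Fin.append x y) =
      ((n : ℝ) / ((n : ℝ) + (m : ℝ))) * FGT M z w k α dt x +
        ((m : ℝ) / ((n : ℝ) + (m : ℝ))) * FGT M z w k α dt y :=
  FGT_decomposable_general d z M w dt k α n m x y
end

section
/- Poverty focus: suppose the achievement matrix x is obtained from y by a simple increment among the non-poor, i.e. there is a single entry (i', j') with x_{i'j'} > y_{i'j'}, all other entries of x and y coincide, and person i' is not poor in y (ρ_k(y_{i'}) = 0). Then for all α ≥ 0, FGT_α(x; z) = FGT_α(y; z). -/
open Finset

/-! The identification step only sees the indicators `r^0_{ij} = [y_{ij} ≤ z_j]`, which can only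
switch off when an achievement grows. Hence the deprivation count `D_i` cannot increase, a non-poor
person stays non-poor, and their row contributes zero to the FGT sum both before and after. -/

section

variable {d : ℕ} {M : Fin d → Fin d → ℝ} {z w x y : Fin d → ℝ}

theorem gap_zero_le_of_le {j : Fin d} (h : y j ≤ x j) : gap z x 0 j ≤ gap z y 0 j := by
  unfold gap
  split_ifs with hx hy hy
  · simp
  · exact absurd (h.trans hx) hy
  · simp
  · exact le_rfl

theorem Dnet_le_Dnet_of_gap_le (hM : ∀ j j', 0 ≤ M j j') {α : ℝ}
    (h : ∀ j, gap z x α j ≤ gap z y α j) (j : Fin d) : Dnet M z x α j ≤ Dnet M z y α j := by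
  have hd : (0 : ℝ) ≤ 1 / ((d : ℝ) - 1) := by
    have : (1 : ℝ) ≤ d := by exact_mod_cast j.pos
    exact one_div_nonneg.mpr (by linarith)
  unfold Dnet
  gcongr with j' _
  · exact h j
  · exact hM j j'
  · exact h j'

theorem Dcount_le_of_le (hM : ∀ j j', 0 ≤ M j j') (hw : ∀ j, 0 ≤ w j) (h : y ≤ x) :
    Dcount M z w x ≤ Dcount M z w y := by
  unfold Dcount
  gcongr with j
  · exact hw j
  · exact Dnet_le_Dnet_of_gap_le hM (fun j => gap_zero_le_of_le (h j)) j

theorem rho_eq_zero_of_le {k : ℝ} (hM : ∀ j j', 0 ≤ M j j') (hw : ∀ j, 0 ≤ w j) (h : y ≤ x)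
    (hy : rho M z w k y = 0) : rho M z w k x = 0 := by
  have hky : ¬ k ≤ Dcount M z w y := fun hk => by simp [rho, hk] at hy
  have hkx : ¬ k ≤ Dcount M z w x := fun hk => hky (hk.trans (Dcount_le_of_le hM hw h))
  simp [rho, hkx]

end

theorem FGT_eq_of_eq_off_nonpoor {N d : ℕ} {M : Fin d → Fin d → ℝ} {z w : Fin d → ℝ}
    {k α dt : ℝ} {x y : Fin N → Fin d → ℝ} (i' : Fin N) (hrow : ∀ i, i ≠ i' → x i = y i)
    (hx : rho M z w k (x i') = 0) (hy : rho M z w k (y i') = 0) :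
    FGT M z w k α dt x = FGT M z w k α dt y := by
  unfold FGT
  congr 1
  refine Finset.sum_congr rfl fun i _ => ?_
  rcases eq_or_ne i i' with rfl | hi
  · simp [hx, hy]
  · rw [hrow i hi]

theorem FGT_poverty_focus_general
    (d : ℕ) (z : Fin d → ℝ)
    (M : Fin d → Fin d → ℝ) (hM0 : ∀ j j', 0 ≤ M j j')
    (w : Fin d → ℝ) (hw : ∀ j, 0 < w j)
    (dt : ℝ) (k : ℝ) (α : ℝ)
    (N : ℕ)
    (x y : Fin N → Fin d → ℝ)
    (i' : Fin N) (j' : Fin d) (hgt : y i' j' < x i' j')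
    (hother : ∀ i j, ¬(i = i' ∧ j = j') → x i j = y i j)
    (hnonpoor : rho M z w k (y i') = 0) :
    FGT M z w k α dt x = FGT M z w k α dt y := by
  have hrow : ∀ i, i ≠ i' → x i = y i := fun i hi =>
    funext fun j => hother i j fun h => hi h.1
  have hdom : y i' ≤ x i' := fun j => by
    rcases eq_or_ne j j' with rfl | hj
    · exact hgt.le
    · exact (hother i' j fun h => hj h.2).ge
  exact FGT_eq_of_eq_off_nonpoor i' hrow
    (rho_eq_zero_of_le hM0 (fun j => (hw j).le) hdom hnonpoor) hnonpoor

/-- poverty focus — a simple increment among the non-poor leaves FGT unchanged. -/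
theorem FGT_poverty_focus
    (d : ℕ) (hd : 2 ≤ d) (z : Fin d → ℝ) (hz : ∀ j, 0 < z j)
    (M : Fin d → Fin d → ℝ) (hM0 : ∀ j j', 0 ≤ M j j') (hM1 : ∀ j j', M j j' ≤ 1)
    (hMdiag : ∀ j, M j j = 1)
    (w : Fin d → ℝ) (hw : ∀ j, 0 < w j) (hwsum : (∑ j, w j) = (d : ℝ))
    (dt : ℝ) (hdt : dt = (d : ℝ) + ((∑ j, w j * colSum M j) - (d : ℝ)) / ((d : ℝ) - 1))
    (k : ℝ) (hk0 : 0 < k) (hk1 : k ≤ dt) (α : ℝ) (hα : 0 ≤ α)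
    (N : ℕ) (hN : 1 ≤ N)
    (x y : Fin N → Fin d → ℝ) (hx : ∀ i j, 0 ≤ x i j) (hy : ∀ i j, 0 ≤ y i j)
    (i' : Fin N) (j' : Fin d) (hgt : y i' j' < x i' j')
    (hother : ∀ i j, ¬(i = i' ∧ j = j') → x i j = y i j)
    (hnonpoor : rho M z w k (y i') = 0) :
    FGT M z w k α dt x = FGT M z w k α dt y :=
  FGT_poverty_focus_general d z M hM0 w hw dt k α N x y i' j' hgt hother hnonpoor
end

section
/- Deprivation focus: suppose the achievement matrix x is obtained from y by a simple increment among the non-deprived, i.e. there is a single entry (i', j') with x_{i'j'} > y_{i'j'} > z_{j'} and all other entries of x and y coincide. Then for all α ≥ 0, FGT_α(x; z) = FGT_α(y; z). -/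
open Finset

/- A change of achievements that keeps every affected entry strictly above its cutoff is invisible
to the gaps `r_{ij}^α`, and every other ingredient of the measure (network-adjusted deprivation,
deprivation count, identification) sees the achievements only through these gaps. -/

section

variable {d : ℕ} {z : Fin d → ℝ}

theorem gap_eq_of_forall_eq_or_nondeprived {x y : Fin d → ℝ}
    (h : ∀ j, x j = y j ∨ (z j < x j ∧ z j < y j)) (α : ℝ) : gap z x α = gap z y α := by
  funext j
  rcases h j with hj | ⟨hxj, hyj⟩
  · rw [gap, gap, hj]
  · rw [gap, gap, if_neg (not_le.mpr hxj), if_neg (not_le.mpr hyj)]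

theorem Dnet_eq_of_gap_eq (M : Fin d → Fin d → ℝ) {x y : Fin d → ℝ} {α : ℝ}
    (h : gap z x α = gap z y α) : Dnet M z x α = Dnet M z y α := by
  unfold Dnet
  rw [h]

theorem rho_eq_of_gap_eq (M : Fin d → Fin d → ℝ) (w : Fin d → ℝ) (k : ℝ) {x y : Fin d → ℝ}
    (h : gap z x 0 = gap z y 0) : rho M z w k x = rho M z w k y := by
  unfold rho Dcount
  rw [Dnet_eq_of_gap_eq M h]

theorem FGT_eq_of_forall_eq_or_nondeprived {N : ℕ} (M : Fin d → Fin d → ℝ) (w : Fin d → ℝ)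
    (k α dt : ℝ) {x y : Fin N → Fin d → ℝ}
    (h : ∀ i j, x i j = y i j ∨ (z j < x i j ∧ z j < y i j)) :
    FGT M z w k α dt x = FGT M z w k α dt y := by
  unfold FGT
  congr 1
  refine Finset.sum_congr rfl fun i _ => ?_
  rw [Dnet_eq_of_gap_eq M (gap_eq_of_forall_eq_or_nondeprived (h i) α),
    rho_eq_of_gap_eq M w k (gap_eq_of_forall_eq_or_nondeprived (h i) 0)]

end

theorem FGT_deprivation_focus_general
    (d : ℕ) (z : Fin d → ℝ)
    (M : Fin d → Fin d → ℝ)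
    (w : Fin d → ℝ)
    (dt : ℝ)
    (k : ℝ) (α : ℝ)
    (N : ℕ)
    (x y : Fin N → Fin d → ℝ)
    (i' : Fin N) (j' : Fin d) (hgt : y i' j' < x i' j') (hnondep : z j' < y i' j')
    (hother : ∀ i j, ¬(i = i' ∧ j = j') → x i j = y i j) :
    FGT M z w k α dt x = FGT M z w k α dt y := by
  refine FGT_eq_of_forall_eq_or_nondeprived M w k α dt fun i j => ?_
  by_cases hij : i = i' ∧ j = j'
  · obtain ⟨rfl, rfl⟩ := hij
    exact Or.inr ⟨hnondep.trans hgt, hnondep⟩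
  · exact Or.inl (hother i j hij)

/-- deprivation focus — a simple increment among the non-deprived leaves FGT
unchanged. -/
theorem FGT_deprivation_focus
    (d : ℕ) (hd : 2 ≤ d) (z : Fin d → ℝ) (hz : ∀ j, 0 < z j)
    (M : Fin d → Fin d → ℝ) (hM0 : ∀ j j', 0 ≤ M j j') (hM1 : ∀ j j', M j j' ≤ 1)
    (hMdiag : ∀ j, M j j = 1)
    (w : Fin d → ℝ) (hw : ∀ j, 0 < w j) (hwsum : (∑ j, w j) = (d : ℝ))
    (dt : ℝ) (hdt : dt = (d : ℝ) + ((∑ j, w j * colSum M j) - (d : ℝ)) / ((d : ℝ) - 1))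
    (k : ℝ) (hk0 : 0 < k) (hk1 : k ≤ dt) (α : ℝ) (hα : 0 ≤ α)
    (N : ℕ) (hN : 1 ≤ N)
    (x y : Fin N → Fin d → ℝ) (hx : ∀ i j, 0 ≤ x i j) (hy : ∀ i j, 0 ≤ y i j)
    (i' : Fin N) (j' : Fin d) (hgt : y i' j' < x i' j') (hnondep : z j' < y i' j')
    (hother : ∀ i j, ¬(i = i' ∧ j = j') → x i j = y i j) :
    FGT M z w k α dt x = FGT M z w k α dt y :=
  FGT_deprivation_focus_general d z M w dt k α N x y i' j' hgt hnondep hother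
end

section
/- Weak monotonicity: suppose the achievement matrix x is obtained from y by a simple increment, i.e. there is a single entry (i', j') with x_{i'j'} > y_{i'j'} and all other entries of x and y coincide. Then for all α ≥ 0, FGT_α(x; z) ≤ FGT_α(y; z). -/
open Finset

/-!
Every ingredient of the measure is antitone in the achievements: each deprivation gap
`((z_j - y_j) / z_j)^α` decreases as `y_j` grows (for `α ≥ 0`), hence so do the nonnegative
combinations `D_{ij}^α` and `D_i`, hence so does the indicator `ρ_k(y_i) = [k ≤ D_i]`.
The summands `w_j D_{ij}^α ρ_k(y_i)` are products of nonnegative antitone factors, so `FGT_α`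
is antitone on the whole achievement matrix, and a simple increment only raises achievements.
-/

section Antitone

variable {d : ℕ} {M : Fin d → Fin d → ℝ} {z w : Fin d → ℝ} {α : ℝ}

lemma gap_nonneg {j : Fin d} (hz : 0 ≤ z j) (u : Fin d → ℝ) : 0 ≤ gap z u α j := by
  unfold gap
  split_ifs with h
  · exact Real.rpow_nonneg (div_nonneg (sub_nonneg.2 h) hz) α
  · exact le_rfl

lemma gap_antitone {j : Fin d} (hz : 0 ≤ z j) (hα : 0 ≤ α) :
    Antitone fun u : Fin d → ℝ => gap z u α j := by
  intro u v huv
  simp only [gap]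
  split_ifs with hv hu hu
  · exact Real.rpow_le_rpow (div_nonneg (sub_nonneg.2 hv) hz) (by gcongr; exact huv j) hα
  · exact absurd ((huv j).trans hv) hu
  · exact Real.rpow_nonneg (div_nonneg (sub_nonneg.2 hu) hz) α
  · exact le_rfl

-- `j` only witnesses `1 ≤ d`; at `d = 1` the factor is the junk value `1 / 0 = 0`.
lemma one_div_natCast_sub_one_nonneg (j : Fin d) : (0 : ℝ) ≤ 1 / ((d : ℝ) - 1) :=
  div_nonneg zero_le_one (sub_nonneg.2 (Nat.one_le_cast.2 j.pos))

lemma Dnet_nonneg (hM : ∀ j j', 0 ≤ M j j') (hz : ∀ j, 0 ≤ z j) (u : Fin d → ℝ) (j : Fin d) :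
    0 ≤ Dnet M z u α j :=
  add_nonneg (gap_nonneg (hz j) u) <| mul_nonneg (one_div_natCast_sub_one_nonneg j) <|
    sum_nonneg fun j' _ => mul_nonneg (hM j j') (gap_nonneg (hz j') u)

lemma Dnet_antitone (hM : ∀ j j', 0 ≤ M j j') (hz : ∀ j, 0 ≤ z j) (hα : 0 ≤ α) (j : Fin d) :
    Antitone fun u => Dnet M z u α j := by
  intro u v huv
  have h := one_div_natCast_sub_one_nonneg j
  simp only [Dnet]
  gcongr with j'
  · exact gap_antitone (hz j) hα huv
  · exact hM j j'
  · exact gap_antitone (hz j') hα huv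

lemma Dcount_antitone (hM : ∀ j j', 0 ≤ M j j') (hz : ∀ j, 0 ≤ z j) (hw : ∀ j, 0 ≤ w j) :
    Antitone (Dcount M z w) := fun _ _ huv =>
  sum_le_sum fun j _ => mul_le_mul_of_nonneg_left (Dnet_antitone hM hz le_rfl j huv) (hw j)

lemma rho_nonneg (k : ℝ) (u : Fin d → ℝ) : 0 ≤ rho M z w k u := by
  unfold rho
  split_ifs <;> norm_num

lemma rho_antitone (hM : ∀ j j', 0 ≤ M j j') (hz : ∀ j, 0 ≤ z j) (hw : ∀ j, 0 ≤ w j) (k : ℝ) :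
    Antitone (rho M z w k) := by
  intro u v huv
  have hD := Dcount_antitone hM hz hw huv
  unfold rho
  split_ifs with hv hu hu
  · exact le_rfl
  · exact absurd (hv.trans hD) hu
  · exact zero_le_one
  · exact le_rfl

lemma FGT_antitone {N : ℕ} (hM : ∀ j j', 0 ≤ M j j') (hz : ∀ j, 0 ≤ z j) (hw : ∀ j, 0 ≤ w j)
    (hα : 0 ≤ α) (k : ℝ) {dt : ℝ} (hdt : 0 ≤ dt) :
    Antitone (FGT (N := N) M z w k α dt) := by
  intro x y hxy
  unfold FGT
  refine mul_le_mul_of_nonneg_left (sum_le_sum fun i _ => sum_le_sum fun j _ => ?_) (by positivity)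
  exact mul_le_mul (mul_le_mul_of_nonneg_left (Dnet_antitone hM hz hα j (hxy i)) (hw j))
    (rho_antitone hM hz hw k (hxy i)) (rho_nonneg k _)
    (mul_nonneg (hw j) (Dnet_nonneg hM hz _ j))

end Antitone

theorem FGT_weak_monotonicity_general
    (d : ℕ) (z : Fin d → ℝ) (hz : ∀ j, 0 < z j)
    (M : Fin d → Fin d → ℝ) (hM0 : ∀ j j', 0 ≤ M j j')
    (w : Fin d → ℝ) (hw : ∀ j, 0 < w j)
    (dt : ℝ)
    (k : ℝ) (hk0 : 0 < k) (hk1 : k ≤ dt) (α : ℝ) (hα : 0 ≤ α)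
    (N : ℕ)
    (x y : Fin N → Fin d → ℝ)
    (i' : Fin N) (j' : Fin d) (hgt : y i' j' < x i' j')
    (hother : ∀ i j, ¬(i = i' ∧ j = j') → x i j = y i j) :
    FGT M z w k α dt x ≤ FGT M z w k α dt y := by
  have hyx : y ≤ x := by
    intro i j
    by_cases hij : i = i' ∧ j = j'
    · obtain ⟨rfl, rfl⟩ := hij
      exact hgt.le
    · exact (hother i j hij).ge
  exact FGT_antitone hM0 (fun j => (hz j).le) (fun j => (hw j).le) hα k (hk0.le.trans hk1) hyx

/-- weak monotonicity — a simple increment never increases FGT. -/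
theorem FGT_weak_monotonicity
    (d : ℕ) (hd : 2 ≤ d) (z : Fin d → ℝ) (hz : ∀ j, 0 < z j)
    (M : Fin d → Fin d → ℝ) (hM0 : ∀ j j', 0 ≤ M j j') (hM1 : ∀ j j', M j j' ≤ 1)
    (hMdiag : ∀ j, M j j = 1)
    (w : Fin d → ℝ) (hw : ∀ j, 0 < w j) (hwsum : (∑ j, w j) = (d : ℝ))
    (dt : ℝ) (hdt : dt = (d : ℝ) + ((∑ j, w j * colSum M j) - (d : ℝ)) / ((d : ℝ) - 1))
    (k : ℝ) (hk0 : 0 < k) (hk1 : k ≤ dt) (α : ℝ) (hα : 0 ≤ α)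
    (N : ℕ) (hN : 1 ≤ N)
    (x y : Fin N → Fin d → ℝ) (hx : ∀ i j, 0 ≤ x i j) (hy : ∀ i j, 0 ≤ y i j)
    (i' : Fin N) (j' : Fin d) (hgt : y i' j' < x i' j')
    (hother : ∀ i j, ¬(i = i' ∧ j = j') → x i j = y i j) :
    FGT M z w k α dt x ≤ FGT M z w k α dt y :=
  FGT_weak_monotonicity_general d z hz M hM0 w hw dt k hk0 hk1 α hα N x y i' j' hgt hother
end
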